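/- Let G : ℝ → [0,∞) and λ > 0, and suppose that for every j ∈ ℤ one has the distributional inequality |{x : |F(x)| ≥ 2^j}| ≤ 2^{-2j} N ‖min(G, N^{-1/2} 2^j)‖_{L²}² for a measurable function F and constant N ≥ 1. Then ‖F‖_{L^{1,2}} ≲ N^{1/2} ‖G‖_{L^{1,2}}. -/

import Mathlib

open MeasureTheory Set
open scoped ENNReal NNReal

/-- Distribution function `t ↦ |{x : |f(x)| > t}|`. -/
noncomputable def distFn (f : ℝ → ℝ) (t : ℝ) : ℝ≥0∞ := volume {x : ℝ | t < |f x|}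

/-- The Lorentz `L^{1,2}` (quasi)norm, via the distribution function. -/
noncomputable def L12Norm (f : ℝ → ℝ) : ℝ≥0∞ :=
  (∫⁻ t in Set.Ioi (0 : ℝ),
      (ENNReal.ofReal t * distFn f t) ^ 2 * ENNReal.ofReal t⁻¹) ^ (1 / 2 : ℝ)

/-! Up to the factors `4` and `8`, the square of the `L^{1,2}` quasinorm is the dyadic sum
`∑ⱼ (2^j |{|f| ≥ 2^j}|)²`. Fix `m` with `2^m ≤ √N < 2^(m+1)`. A layer-cake bound for the truncated
square turns the hypothesis at level `j` into `2^j |{|F| ≥ 2^j}| ≲ N 2^(-m) ∑ₙ 2^(-n) u(j - n)`,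
where `u(k) = 2^(k-m-1) |{G ≥ 2^(k-m-1)}|` is a shift of the dyadic sequence of `G`. This is a
convolution with the summable kernel `2^(-n)`, so Young's inequality on `ℤ` bounds the dyadic sum
of `F` by `N` times that of `G`. -/

lemma ENNReal.ofReal_two_zpow (j : ℤ) : ENNReal.ofReal ((2 : ℝ) ^ j) = 2 ^ j := by
  rw [show (2 : ℝ) ^ j = ((2 : ℝ≥0) ^ j : ℝ≥0) by norm_cast, ENNReal.ofReal_coe_nnreal,
    ENNReal.coe_zpow two_ne_zero]
  rfl

lemma ENNReal.two_zpow_add (i j : ℤ) : (2 : ℝ≥0∞) ^ (i + j) = 2 ^ i * 2 ^ j :=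
  ENNReal.zpow_add two_ne_zero ENNReal.ofNat_ne_top i j

lemma ENNReal.two_zpow_ne_zero (j : ℤ) : (2 : ℝ≥0∞) ^ j ≠ 0 :=
  (ENNReal.zpow_pos two_ne_zero ENNReal.ofNat_ne_top j).ne'

lemma ENNReal.two_zpow_ne_top (j : ℤ) : (2 : ℝ≥0∞) ^ j ≠ ⊤ :=
  ENNReal.zpow_ne_top two_ne_zero ENNReal.ofNat_ne_top j

lemma ENNReal.two_zpow_sub_natCast (K : ℤ) (n : ℕ) : (2 : ℝ≥0∞) ^ (K - n) = 2 ^ K * 2⁻¹ ^ n := by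
  rw [ENNReal.zpow_sub two_ne_zero ENNReal.ofNat_ne_top, zpow_natCast, ENNReal.inv_pow]

lemma ENNReal.tsum_inv_two_pow : ∑' n : ℕ, (2⁻¹ : ℝ≥0∞) ^ n = 2 := by
  rw [ENNReal.tsum_geometric, ENNReal.one_sub_inv_two, inv_inv]

lemma ENNReal.tsum_mul_sq_le {ι : Type*} (w f : ι → ℝ≥0∞) :
    (∑' i, w i * f i) ^ 2 ≤ (∑' i, w i) * ∑' i, w i * f i ^ 2 := by
  have holder : ∑' i, w i * f i ≤
      (∑' i, w i) ^ (1 - (2 : ℝ)⁻¹) * (∑' i, w i * f i ^ (2 : ℝ)) ^ (2 : ℝ)⁻¹ :=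
    ENNReal.summable.tsum_le_of_sum_le fun s =>
      (ENNReal.inner_le_weight_mul_Lp_of_nonneg s one_le_two w f).trans <| by
        gcongr <;> exact ENNReal.sum_le_tsum s
  calc (∑' i, w i * f i) ^ 2
      ≤ ((∑' i, w i) ^ (1 - (2 : ℝ)⁻¹) * (∑' i, w i * f i ^ (2 : ℝ)) ^ (2 : ℝ)⁻¹) ^ 2 := by
        gcongr
    _ = (∑' i, w i) * ∑' i, w i * f i ^ 2 := by
        rw [mul_pow, ← ENNReal.rpow_natCast, ← ENNReal.rpow_natCast, ← ENNReal.rpow_mul,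
          ← ENNReal.rpow_mul]
        norm_num

lemma ENNReal.tsum_sq_conv_le (w : ℕ → ℝ≥0∞) (u : ℤ → ℝ≥0∞) :
    ∑' j : ℤ, (∑' n : ℕ, w n * u (j - n)) ^ 2 ≤ (∑' n, w n) ^ 2 * ∑' k, u k ^ 2 := by
  have shift (n : ℕ) : ∑' j : ℤ, u (j - n) ^ 2 = ∑' k, u k ^ 2 :=
    (Equiv.subRight (n : ℤ)).tsum_eq fun k => u k ^ 2
  calc ∑' j : ℤ, (∑' n : ℕ, w n * u (j - n)) ^ 2
      ≤ ∑' j : ℤ, (∑' n, w n) * ∑' n : ℕ, w n * u (j - n) ^ 2 :=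
        ENNReal.tsum_le_tsum fun j => ENNReal.tsum_mul_sq_le _ _
    _ = (∑' n, w n) * ∑' n : ℕ, w n * ∑' j : ℤ, u (j - n) ^ 2 := by
        rw [ENNReal.tsum_mul_left, ENNReal.tsum_comm]
        simp only [ENNReal.tsum_mul_left]
    _ = (∑' n, w n) ^ 2 * ∑' k, u k ^ 2 := by
        simp only [shift, ENNReal.tsum_mul_right]
        ring

lemma iUnion_Ico_two_zpow : ⋃ j : ℤ, Ico ((2 : ℝ) ^ j) (2 ^ (j + 1)) = Ioi 0 := by
  ext t
  simp only [mem_iUnion, mem_Ioi]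
  refine ⟨fun ⟨j, hj⟩ => (zpow_pos two_pos j).trans_le hj.1, fun ht => ?_⟩
  exact exists_mem_Ico_zpow ht one_lt_two

lemma pairwise_disjoint_Ico_two_zpow :
    Pairwise (Function.onFun Disjoint fun j : ℤ => Ico ((2 : ℝ) ^ j) (2 ^ (j + 1))) := by
  refine pairwise_disjoint_on _ |>.2 fun i j hij => disjoint_left.2 fun t hi hj => ?_
  have : (2 : ℝ) ^ (i + 1) ≤ 2 ^ j := zpow_le_zpow_right₀ one_le_two (by omega)
  linarith [hi.2, hj.1]

lemma volume_Ico_two_zpow (j : ℤ) : volume (Ico ((2 : ℝ) ^ j) (2 ^ (j + 1))) = 2 ^ j := by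
  rw [Real.volume_Ico, zpow_add_one₀ two_ne_zero, mul_two, add_sub_cancel_right,
    ENNReal.ofReal_two_zpow]

noncomputable def lorentzIntegrand (f : ℝ → ℝ) (t : ℝ) : ℝ≥0∞ :=
  (ENNReal.ofReal t * distFn f t) ^ 2 * ENNReal.ofReal t⁻¹

lemma L12Norm_eq_lintegral_lorentzIntegrand (f : ℝ → ℝ) :
    L12Norm f = (∫⁻ t in Ioi 0, lorentzIntegrand f t) ^ (1 / 2 : ℝ) := rfl

lemma measurable_lorentzIntegrand (f : ℝ → ℝ) : Measurable (lorentzIntegrand f) := by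
  have : Measurable (distFn f) :=
    Antitone.measurable fun _ _ hst => measure_mono fun _ hx => hst.trans_lt hx
  unfold lorentzIntegrand
  fun_prop

noncomputable def dyadicMass (f : ℝ → ℝ) (j : ℤ) : ℝ≥0∞ :=
  2 ^ j * volume {x | (2 : ℝ) ^ j ≤ |f x|}

lemma lintegral_lorentzIntegrand_eq_tsum (f : ℝ → ℝ) :
    ∫⁻ t in Ioi 0, lorentzIntegrand f t =
      ∑' j : ℤ, ∫⁻ t in Ico ((2 : ℝ) ^ j) (2 ^ (j + 1)), lorentzIntegrand f t := by
  rw [← iUnion_Ico_two_zpow, lintegral_iUnion (fun _ => measurableSet_Ico)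
    pairwise_disjoint_Ico_two_zpow]

lemma setLIntegral_Ico_lorentzIntegrand_le (f : ℝ → ℝ) (j : ℤ) :
    ∫⁻ t in Ico ((2 : ℝ) ^ j) (2 ^ (j + 1)), lorentzIntegrand f t ≤ 4 * dyadicMass f j ^ 2 := by
  have bound : ∀ t ∈ Ico ((2 : ℝ) ^ j) (2 ^ (j + 1)), lorentzIntegrand f t ≤
      (2 * 2 ^ j * volume {x | (2 : ℝ) ^ j ≤ |f x|}) ^ 2 * (2 ^ j)⁻¹ := by
    intro t ⟨ht₁, ht₂⟩
    have ht : 0 < t := (zpow_pos two_pos j).trans_le ht₁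
    rw [lorentzIntegrand, ENNReal.ofReal_inv_of_pos ht]
    gcongr
    · rw [← ENNReal.ofReal_two_zpow, mul_comm, ← ENNReal.ofReal_ofNat 2,
        ← ENNReal.ofReal_mul (by positivity), ← zpow_add_one₀ two_ne_zero]
      exact ENNReal.ofReal_le_ofReal ht₂.le
    · exact measure_mono fun x hx => ht₁.trans hx.le
    · rw [← ENNReal.ofReal_two_zpow]
      exact ENNReal.ofReal_le_ofReal ht₁
  calc ∫⁻ t in Ico ((2 : ℝ) ^ j) (2 ^ (j + 1)), lorentzIntegrand f t
      ≤ ∫⁻ _ in Ico ((2 : ℝ) ^ j) (2 ^ (j + 1)),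
          (2 * 2 ^ j * volume {x | (2 : ℝ) ^ j ≤ |f x|}) ^ 2 * (2 ^ j)⁻¹ :=
        setLIntegral_mono measurable_const bound
    _ = 4 * dyadicMass f j ^ 2 := by
        rw [setLIntegral_const, volume_Ico_two_zpow, mul_assoc _ (2 ^ j)⁻¹,
          ENNReal.inv_mul_cancel (ENNReal.two_zpow_ne_zero j) (ENNReal.two_zpow_ne_top j),
          dyadicMass]
        ring

lemma dyadicMass_succ_sq_le (f : ℝ → ℝ) (j : ℤ) :
    dyadicMass f (j + 1) ^ 2 ≤
      8 * ∫⁻ t in Ico ((2 : ℝ) ^ j) (2 ^ (j + 1)), lorentzIntegrand f t := by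
  have bound : ∀ t ∈ Ico ((2 : ℝ) ^ j) (2 ^ (j + 1)),
      (2 ^ j * volume {x | (2 : ℝ) ^ (j + 1) ≤ |f x|}) ^ 2 * (2 * 2 ^ j)⁻¹ ≤
        lorentzIntegrand f t := by
    intro t ⟨ht₁, ht₂⟩
    have ht : 0 < t := (zpow_pos two_pos j).trans_le ht₁
    rw [lorentzIntegrand, ENNReal.ofReal_inv_of_pos ht]
    gcongr
    · rw [← ENNReal.ofReal_two_zpow]
      exact ENNReal.ofReal_le_ofReal ht₁
    · exact measure_mono fun x hx => ht₂.trans_le hx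
    · rw [← ENNReal.ofReal_two_zpow, mul_comm, ← ENNReal.ofReal_ofNat 2,
        ← ENNReal.ofReal_mul (by positivity), ← zpow_add_one₀ two_ne_zero]
      exact ENNReal.ofReal_le_ofReal ht₂.le
  have eight_mul_inv_two : (8 : ℝ≥0∞) * 2⁻¹ = 4 := by
    rw [show (8 : ℝ≥0∞) = 4 * 2 by norm_num, mul_assoc,
      ENNReal.mul_inv_cancel two_ne_zero ENNReal.ofNat_ne_top, mul_one]
  calc dyadicMass f (j + 1) ^ 2
      = 8 * ((2 ^ j * volume {x | (2 : ℝ) ^ (j + 1) ≤ |f x|}) ^ 2 * (2 * 2 ^ j)⁻¹ * 2 ^ j) := by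
        rw [ENNReal.mul_inv (by simp) (by simp), mul_assoc _ _ (2 ^ j), mul_assoc 2⁻¹,
          ENNReal.inv_mul_cancel (ENNReal.two_zpow_ne_zero j) (ENNReal.two_zpow_ne_top j),
          dyadicMass, ENNReal.two_zpow_add, zpow_one, mul_one, mul_comm _ (2⁻¹ : ℝ≥0∞),
          ← mul_assoc, eight_mul_inv_two]
        ring
    _ = 8 * ∫⁻ _ in Ico ((2 : ℝ) ^ j) (2 ^ (j + 1)),
          (2 ^ j * volume {x | (2 : ℝ) ^ (j + 1) ≤ |f x|}) ^ 2 * (2 * 2 ^ j)⁻¹ := by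
        rw [setLIntegral_const, volume_Ico_two_zpow]
    _ ≤ 8 * ∫⁻ t in Ico ((2 : ℝ) ^ j) (2 ^ (j + 1)), lorentzIntegrand f t := by
        gcongr 8 * ?_
        exact setLIntegral_mono (measurable_lorentzIntegrand f) bound

lemma lintegral_lorentzIntegrand_le_tsum_dyadicMass_sq (f : ℝ → ℝ) :
    ∫⁻ t in Ioi 0, lorentzIntegrand f t ≤ 4 * ∑' j, dyadicMass f j ^ 2 := by
  rw [lintegral_lorentzIntegrand_eq_tsum, ← ENNReal.tsum_mul_left]
  exact ENNReal.tsum_le_tsum (setLIntegral_Ico_lorentzIntegrand_le f)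

lemma tsum_dyadicMass_sq_le_lintegral_lorentzIntegrand (f : ℝ → ℝ) :
    ∑' j, dyadicMass f j ^ 2 ≤ 8 * ∫⁻ t in Ioi 0, lorentzIntegrand f t := by
  rw [lintegral_lorentzIntegrand_eq_tsum, ← ENNReal.tsum_mul_left,
    ← (Equiv.addRight (1 : ℤ)).tsum_eq]
  exact ENNReal.tsum_le_tsum (dyadicMass_succ_sq_le f)

/-- The term with `K - n = min K ⌊log₂ g⌋` alone dominates. -/
lemma ofReal_min_sq_le_tsum_indicator {g M : ℝ} {K : ℤ} (hg : 0 ≤ g) (hM : 0 ≤ M)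
    (hMK : M ≤ 2 ^ (K + 1)) :
    ENNReal.ofReal (min g M ^ 2) ≤
      ∑' n : ℕ,
        (Ici ((2 : ℝ) ^ (K - n))).indicator (fun _ => 4 * ((2 : ℝ≥0∞) ^ (K - n)) ^ 2) g := by
  rcases hg.eq_or_lt with rfl | hg
  · simp [min_eq_left hM]
  set p := min K (Int.log 2 g) with hp
  have hKp : K - ((K - p).toNat : ℤ) = p := by rw [Int.toNat_of_nonneg (by omega)]; ring
  have hp_le : (2 : ℝ) ^ p ≤ g :=
    (zpow_le_zpow_right₀ one_le_two (min_le_right _ _)).trans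
      (by exact_mod_cast Int.zpow_log_le_self one_lt_two hg)
  have hmin_le : min g M ≤ 2 ^ (p + 1) := by
    rcases le_total K (Int.log 2 g) with h | h
    · rw [hp, min_eq_left h]
      exact (min_le_right _ _).trans hMK
    · rw [hp, min_eq_right h]
      exact (min_le_left _ _).trans
        (by exact_mod_cast (Int.lt_zpow_succ_log_self one_lt_two g).le)
  refine le_trans ?_ (ENNReal.le_tsum (K - p).toNat)
  rw [hKp, indicator_of_mem (mem_Ici.2 hp_le)]
  calc ENNReal.ofReal (min g M ^ 2)
      ≤ ENNReal.ofReal (((2 : ℝ) ^ (p + 1)) ^ 2) := by gcongr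
    _ = 4 * ((2 : ℝ≥0∞) ^ p) ^ 2 := by
        rw [ENNReal.ofReal_pow (by positivity), ENNReal.ofReal_two_zpow, ENNReal.two_zpow_add,
          zpow_one]
        ring

lemma lintegral_ofReal_min_sq_le {G : ℝ → ℝ} (hG : Measurable G) (hG0 : ∀ x, 0 ≤ G x) {M : ℝ}
    (hM : 0 ≤ M) {K : ℤ} (hMK : M ≤ 2 ^ (K + 1)) :
    ∫⁻ x, ENNReal.ofReal (min (G x) M ^ 2) ≤
      4 * 2 ^ K * ∑' n : ℕ, 2⁻¹ ^ n * dyadicMass G (K - n) := by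
  have level (k : ℤ) : G ⁻¹' Ici ((2 : ℝ) ^ k) = {x | (2 : ℝ) ^ k ≤ |G x|} := by
    ext x
    simp [abs_of_nonneg (hG0 x)]
  calc ∫⁻ x, ENNReal.ofReal (min (G x) M ^ 2)
      ≤ ∫⁻ x, ∑' n : ℕ, (G ⁻¹' Ici ((2 : ℝ) ^ (K - n))).indicator
          (fun _ => 4 * ((2 : ℝ≥0∞) ^ (K - n)) ^ 2) x :=
        lintegral_mono fun x => ofReal_min_sq_le_tsum_indicator (hG0 x) hM hMK
    _ = ∑' n : ℕ, 4 * ((2 : ℝ≥0∞) ^ (K - n)) ^ 2 * volume {x | (2 : ℝ) ^ (K - n) ≤ |G x|} := by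
        rw [lintegral_tsum fun n => (aemeasurable_const.indicator
          (measurableSet_Ici.preimage hG))]
        refine tsum_congr fun n => ?_
        rw [lintegral_indicator_const (measurableSet_Ici.preimage hG), level]
    _ = 4 * 2 ^ K * ∑' n : ℕ, 2⁻¹ ^ n * dyadicMass G (K - n) := by
        rw [← ENNReal.tsum_mul_left]
        refine tsum_congr fun n => ?_
        rw [dyadicMass, ENNReal.two_zpow_sub_natCast]
        ring

section DistributionBound

variable {F G : ℝ → ℝ} {N : ℝ}

lemma dyadicMass_le_of_distribution_bound (hG : Measurable G) (hG0 : ∀ x, 0 ≤ G x) (hN : 0 < N)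
    {m : ℤ} (hm : (2 : ℝ) ^ m ≤ N ^ (1 / 2 : ℝ)) {j : ℤ}
    (hj : volume {x : ℝ | (2 : ℝ) ^ j ≤ |F x|} ≤
      ENNReal.ofReal ((2 : ℝ) ^ (-(2 * j)) * N) *
        ∫⁻ x, ENNReal.ofReal ((min (G x) (N ^ (-(1 / 2) : ℝ) * (2 : ℝ) ^ j)) ^ 2)) :
    dyadicMass F j ≤ 4 * ENNReal.ofReal N * (2 ^ (m + 1))⁻¹ *
      ∑' n : ℕ, 2⁻¹ ^ n * dyadicMass G (j - n - (m + 1)) := by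
  have hM : N ^ (-(1 / 2) : ℝ) * (2 : ℝ) ^ j ≤ 2 ^ (j - (m + 1) + 1) :=
    calc N ^ (-(1 / 2) : ℝ) * (2 : ℝ) ^ j
        ≤ ((2 : ℝ) ^ m)⁻¹ * 2 ^ j := by
          rw [Real.rpow_neg hN.le]
          gcongr
      _ = 2 ^ (j - (m + 1) + 1) := by
          rw [← zpow_neg, ← zpow_add₀ two_ne_zero]
          ring_nf
  have trunc := lintegral_ofReal_min_sq_le hG hG0 (by positivity) hM
  calc dyadicMass F j
      ≤ 2 ^ j * (2 ^ (-(2 * j)) * ENNReal.ofReal N *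
          (4 * 2 ^ (j - (m + 1)) * ∑' n : ℕ, 2⁻¹ ^ n * dyadicMass G (j - (m + 1) - n))) := by
        rw [dyadicMass, ← ENNReal.ofReal_two_zpow (-(2 * j)), ← ENNReal.ofReal_mul (by positivity)]
        gcongr
        exact hj.trans (by gcongr)
    _ = 4 * ENNReal.ofReal N * (2 ^ j * 2 ^ (-(2 * j)) * 2 ^ (j - (m + 1))) *
          ∑' n : ℕ, 2⁻¹ ^ n * dyadicMass G (j - n - (m + 1)) := by
        simp only [sub_right_comm j _ (m + 1)]
        ring
    _ = 4 * ENNReal.ofReal N * (2 ^ (m + 1))⁻¹ *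
          ∑' n : ℕ, 2⁻¹ ^ n * dyadicMass G (j - n - (m + 1)) := by
        rw [← ENNReal.two_zpow_add, ← ENNReal.two_zpow_add, ← ENNReal.zpow_neg]
        ring_nf

lemma tsum_dyadicMass_sq_le_of_distribution_bound (hG : Measurable G) (hG0 : ∀ x, 0 ≤ G x)
    (hN : 0 < N)
    (hF : ∀ j : ℤ, volume {x : ℝ | (2 : ℝ) ^ j ≤ |F x|} ≤
      ENNReal.ofReal ((2 : ℝ) ^ (-(2 * j)) * N) *
        ∫⁻ x, ENNReal.ofReal ((min (G x) (N ^ (-(1 / 2) : ℝ) * (2 : ℝ) ^ j)) ^ 2)) :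
    ∑' j, dyadicMass F j ^ 2 ≤ 64 * ENNReal.ofReal N * ∑' k, dyadicMass G k ^ 2 := by
  set m := Int.log 2 (N ^ (1 / 2 : ℝ))
  have hsqrt : 0 < N ^ (1 / 2 : ℝ) := Real.rpow_pos_of_pos hN _
  have hm : (2 : ℝ) ^ m ≤ N ^ (1 / 2 : ℝ) := by
    exact_mod_cast Int.zpow_log_le_self one_lt_two hsqrt
  have hN_le : ENNReal.ofReal N * ((2 ^ (m + 1))⁻¹) ^ 2 ≤ 1 := by
    have hlt : N ^ (1 / 2 : ℝ) < 2 ^ (m + 1) := by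
      exact_mod_cast Int.lt_zpow_succ_log_self (by norm_num : 1 < 2) (N ^ (1 / 2 : ℝ))
    have hsq : (N ^ (1 / 2 : ℝ)) ^ 2 = N := by
      rw [← Real.rpow_natCast, ← Real.rpow_mul hN.le]
      norm_num
    have : ENNReal.ofReal N ≤ (2 ^ (m + 1)) ^ 2 := by
      rw [← ENNReal.ofReal_two_zpow, ← ENNReal.ofReal_pow (by positivity), ← hsq]
      gcongr
    rw [← ENNReal.inv_pow, ← div_eq_mul_inv]
    exact ENNReal.div_le_of_le_mul (by rwa [one_mul])
  set u : ℤ → ℝ≥0∞ := fun k => dyadicMass G (k - (m + 1))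
  have shift : ∑' k, u k ^ 2 = ∑' k, dyadicMass G k ^ 2 :=
    (Equiv.subRight (m + 1)).tsum_eq fun k => dyadicMass G k ^ 2
  calc ∑' j, dyadicMass F j ^ 2
      ≤ ∑' j : ℤ, (4 * ENNReal.ofReal N * (2 ^ (m + 1))⁻¹ * ∑' n : ℕ, 2⁻¹ ^ n * u (j - n)) ^ 2 :=
        ENNReal.tsum_le_tsum fun j =>
          pow_le_pow_left' (dyadicMass_le_of_distribution_bound hG hG0 hN hm (hF j)) 2
    _ = (4 * ENNReal.ofReal N * (2 ^ (m + 1))⁻¹) ^ 2 *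
          ∑' j : ℤ, (∑' n : ℕ, 2⁻¹ ^ n * u (j - n)) ^ 2 := by
        simp only [mul_pow, ENNReal.tsum_mul_left]
    _ ≤ (4 * ENNReal.ofReal N * (2 ^ (m + 1))⁻¹) ^ 2 * (2 ^ 2 * ∑' k, u k ^ 2) := by
        gcongr
        simpa only [ENNReal.tsum_inv_two_pow] using ENNReal.tsum_sq_conv_le (2⁻¹ ^ ·) u
    _ = 64 * ENNReal.ofReal N * (ENNReal.ofReal N * ((2 ^ (m + 1))⁻¹) ^ 2) * ∑' k, u k ^ 2 := by
        ring
    _ ≤ 64 * ENNReal.ofReal N * ∑' k, dyadicMass G k ^ 2 := by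
        grw [hN_le, mul_one, shift]

end DistributionBound

/-- If `F` satisfies `|{|F| ≥ 2^j}| ≤ 2^{-2j} N ‖min(G, N^{-1/2} 2^j)‖₂²` for all `j ∈ ℤ`, then
`‖F‖_{L^{1,2}} ≲ N^{1/2} ‖G‖_{L^{1,2}}` with an absolute constant. -/
theorem stmt_19 :
    ∃ C : ℝ≥0, 0 < C ∧
      ∀ (N : ℝ), 1 ≤ N →
      ∀ (F : ℝ → ℝ), Measurable F →
      ∀ (G : ℝ → ℝ), Measurable G → (∀ x, 0 ≤ G x) →
        (∀ j : ℤ, volume {x : ℝ | (2 : ℝ) ^ j ≤ |F x|} ≤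
            ENNReal.ofReal ((2 : ℝ) ^ (-(2 * j)) * N) *
              ∫⁻ x, ENNReal.ofReal
                ((min (G x) (N ^ (-(1 / 2) : ℝ) * (2 : ℝ) ^ j)) ^ 2)) →
        L12Norm F ≤ C * ENNReal.ofReal (N ^ ((1 / 2) : ℝ)) * L12Norm G := by
  refine ⟨64, by norm_num, fun N hN F _ G hG hG0 hF => ?_⟩
  have hN0 : 0 < N := one_pos.trans_le hN
  have key : ∫⁻ t in Ioi 0, lorentzIntegrand F t ≤
      64 ^ 2 * ENNReal.ofReal N * ∫⁻ t in Ioi 0, lorentzIntegrand G t :=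
    calc ∫⁻ t in Ioi 0, lorentzIntegrand F t
        ≤ 4 * (64 * ENNReal.ofReal N * (8 * ∫⁻ t in Ioi 0, lorentzIntegrand G t)) := by
          grw [lintegral_lorentzIntegrand_le_tsum_dyadicMass_sq,
            tsum_dyadicMass_sq_le_of_distribution_bound hG hG0 hN0 hF,
            tsum_dyadicMass_sq_le_lintegral_lorentzIntegrand]
      _ = 2048 * ENNReal.ofReal N * ∫⁻ t in Ioi 0, lorentzIntegrand G t := by ring
      _ ≤ 64 ^ 2 * ENNReal.ofReal N * ∫⁻ t in Ioi 0, lorentzIntegrand G t := by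
          gcongr
          norm_num
  have half_nonneg : (0 : ℝ) ≤ 1 / 2 := by norm_num
  calc L12Norm F
      ≤ (64 ^ 2 * ENNReal.ofReal N * ∫⁻ t in Ioi 0, lorentzIntegrand G t) ^ (1 / 2 : ℝ) :=
        ENNReal.rpow_le_rpow key half_nonneg
    _ = (64 : ℝ≥0) * ENNReal.ofReal (N ^ (1 / 2 : ℝ)) * L12Norm G := by
        rw [ENNReal.mul_rpow_of_nonneg _ _ half_nonneg, ENNReal.mul_rpow_of_nonneg _ _ half_nonneg,
          ENNReal.ofReal_rpow_of_pos hN0, ← ENNReal.rpow_natCast, ← ENNReal.rpow_mul,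
          L12Norm_eq_lintegral_lorentzIntegrand]
        norm_num
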